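/- Let X be the attractor of an IFS {f_i}_{i∈Λ}, f_i(x) = rx + a_i with 0 < r < 1, and suppose 0 ∈ X ⊆ [0,1). Define s_n = log N_{r^n}(X_n) with X_n = {f_i(0) : i ∈ Λ^n}. Then there is a constant C such that s_{m+n} ≥ s_m + s_n − C for all m, n ≥ 1. -/

import Mathlib

open Set Pointwise

/-- The covering number of `Y` at scale `ε`. -/
noncomputable def covN (ε : ℝ) (Y : Set ℝ) : ℕ :=
  sInf {n : ℕ | ∃ c : Fin n → Set ℝ,
    (∀ i, EMetric.diam (c i) ≤ ENNReal.ofReal ε) ∧ Y ⊆ ⋃ i, c i}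

/-- Composition `f_{i_1} ∘ ⋯ ∘ f_{i_n}` of the maps along a finite word. -/
def wordComp {Λ : Type*} (f : Λ → ℝ → ℝ) : (n : ℕ) → (Fin n → Λ) → ℝ → ℝ
  | 0, _, x => x
  | n + 1, i, x => f (i 0) (wordComp f n (fun k => i k.succ) x)

/-- The `n`-th approximation `X_n = {f_i(0) : i ∈ Λⁿ}`. -/
def iterPts {Λ : Type*} (f : Λ → ℝ → ℝ) (n : ℕ) : Set ℝ :=
  Set.range (fun i : Fin n → Λ => wordComp f n i 0)

/-!
Since `X_{m+n} ⊇ X_m + rᵐ X_n` and `X_n ⊆ [0, 1)`, the set `X_{m+n}` contains a translate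
`p + rᵐ X_n ⊆ [p, p + rᵐ)` for every `p ∈ X_m`. Take points `p` of `X_m` in pairwise distinct cells
`[k rᵐ, (k+1) rᵐ)`; there are at least `N_{rᵐ}(X_m)` of them. Each translate needs, after rescaling,
at least `N_{rⁿ}(X_n)` sets of an optimal `r^{m+n}`-cover of `X_{m+n}`, and a set of diameter at most
`rᵐ` meets at most three translates. Double counting gives `N_m N_n ≤ 3 N_{m+n}`, i.e. `C = log 3`.
-/

open Finset in
lemma covN_le_card {ι : Type*} {ε : ℝ} {Y : Set ℝ} (s : Finset ι) (c : ι → Set ℝ)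
    (hc : ∀ i ∈ s, Metric.ediam (c i) ≤ ENNReal.ofReal ε) (hY : ∀ y ∈ Y, ∃ i ∈ s, y ∈ c i) :
    covN ε Y ≤ #s := by
  refine Nat.sInf_le ⟨fun j => c (s.equivFin.symm j), fun j => hc _ (s.equivFin.symm j).2, ?_⟩
  intro y hy
  obtain ⟨i, hi, hyc⟩ := hY y hy
  exact mem_iUnion.mpr ⟨s.equivFin ⟨i, hi⟩, by simpa using hyc⟩

lemma exists_cover_covN (ε : ℝ) {Y : Set ℝ} (hY : Y.Finite) :
    ∃ c : Fin (covN ε Y) → Set ℝ,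
      (∀ i, Metric.ediam (c i) ≤ ENNReal.ofReal ε) ∧ Y ⊆ ⋃ i, c i := by
  refine Nat.sInf_mem (s := {n | ∃ c : Fin n → Set ℝ,
    (∀ i, Metric.ediam (c i) ≤ ENNReal.ofReal ε) ∧ Y ⊆ ⋃ i, c i})
    ⟨_, fun j => {(hY.toFinset.equivFin.symm j : ℝ)}, by simp, fun y hy => ?_⟩
  exact mem_iUnion.mpr ⟨hY.toFinset.equivFin ⟨y, hY.mem_toFinset.mpr hy⟩, by simp⟩

lemma covN_pos (ε : ℝ) {Y : Set ℝ} (hY : Y.Finite) (hne : Y.Nonempty) : 0 < covN ε Y := by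
  obtain ⟨c, -, hc⟩ := exists_cover_covN ε hY
  obtain ⟨y, hy⟩ := hne
  exact (mem_iUnion.mp (hc hy)).choose.pos

open Finset in
/-- One point of `A` in each cell `[kε, (k+1)ε)` that `A` meets. -/
lemma exists_injOn_floor_covN_le {ε : ℝ} (hε : 0 < ε) {A : Set ℝ} (hA : A.Finite) :
    ∃ P : Finset ℝ, ↑P ⊆ A ∧ InjOn (fun x => ⌊x / ε⌋) P ∧ covN ε A ≤ #P := by
  classical
  obtain ⟨P, hPA, hinj, himage⟩ := Finset.exists_subset_injOn_image_eq_of_surjOn A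
    (hA.toFinset.image fun x => ⌊x / ε⌋) (by intro k hk; simpa using hk)
  refine ⟨P, hPA, hinj, ?_⟩
  rw [← card_image_of_injOn hinj, himage]
  refine covN_le_card _ (fun k : ℤ => Ico (k * ε) ((k + 1) * ε)) (fun k _ => ?_) fun x hx => ?_
  · rw [Real.ediam_Ico]
    exact ENNReal.ofReal_le_ofReal (by ring_nf; rfl)
  · refine ⟨⌊x / ε⌋, mem_image_of_mem _ (hA.mem_toFinset.mpr hx), ?_, ?_⟩
    · exact (le_div_iff₀ hε).mp (Int.floor_le _)
    · exact (div_lt_iff₀ hε).mp (Int.lt_floor_add_one _)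

open Finset in
lemma card_le_three_of_forall_le_add_two {F : Finset ℤ} (hF : ∀ a ∈ F, ∀ b ∈ F, a ≤ b + 2) :
    #F ≤ 3 := by
  rcases F.eq_empty_or_nonempty with rfl | hne
  · simp
  calc #F ≤ #(Icc (F.min' hne) (F.min' hne + 2)) :=
        card_le_card fun a ha => mem_Icc.mpr ⟨F.min'_le a ha, hF a ha _ (F.min'_mem hne)⟩
    _ = 3 := by rw [Int.card_Icc]; omega

open Classical Finset in
/-- For `p` in the cell `[kε, (k+1)ε)` the window `[p, p + ε)` lies in `[kε, (k+2)ε)`, so a set of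
diameter at most `ε` only meets windows of three consecutive cells. -/
lemma card_filter_inter_Ico_nonempty_le_three {ε : ℝ} (hε : 0 < ε) {P : Finset ℝ}
    (hP : InjOn (fun x => ⌊x / ε⌋) P) {s : Set ℝ} (hs : Metric.ediam s ≤ ENNReal.ofReal ε) :
    #{p ∈ P | (s ∩ Set.Ico p (p + ε)).Nonempty} ≤ 3 := by
  rw [← card_image_of_injOn (hP.mono (filter_subset _ _))]
  refine card_le_three_of_forall_le_add_two ?_
  simp only [Finset.forall_mem_image, Finset.mem_filter]
  rintro p ⟨-, x, hxs, hxp⟩ q ⟨-, y, hys, hyq⟩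
  have hxy : x - y ≤ ε := by
    have := (Metric.edist_le_ediam_of_mem hxs hys).trans hs
    rw [edist_le_ofReal hε.le, Real.dist_eq] at this
    exact (le_abs_self _).trans this
  have : p / ε < q / ε + 2 := by
    rw [div_lt_iff₀ hε, add_mul, div_mul_cancel₀ _ hε.ne']
    linarith [hxp.1, hyq.2]
  simpa using Int.floor_mono this.le

lemma ediam_preimage_affine_le {ε δ : ℝ} (hε : 0 < ε) (p : ℝ) {s : Set ℝ}
    (hs : Metric.ediam s ≤ ENNReal.ofReal (ε * δ)) :
    Metric.ediam ((fun y => p + ε * y) ⁻¹' s) ≤ ENNReal.ofReal δ := by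
  have hanti : AntilipschitzWith ‖ε‖₊⁻¹ fun y => p + ε * y := by
    simpa [Function.comp_def] using
      (isometry_add_left p).antilipschitz.comp (antilipschitzWith_mul_left hε.ne')
  have hε' : ENNReal.ofReal ε ≠ 0 := by simpa using hε
  calc Metric.ediam ((fun y => p + ε * y) ⁻¹' s)
      ≤ (ENNReal.ofReal ε)⁻¹ * ENNReal.ofReal (ε * δ) := by
        grw [hanti.ediam_preimage_le, hs, ENNReal.coe_inv (by simpa using hε.ne'),
          ← Real.enorm_eq_ofReal hε.le]
        rfl
    _ = ENNReal.ofReal δ := by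
        rw [ENNReal.ofReal_mul hε.le, ENNReal.inv_mul_cancel_left hε' ENNReal.ofReal_ne_top]

open Classical Finset in
lemma covN_le_card_filter_inter_nonempty {ι : Type*} {ε δ : ℝ} (hε : 0 < ε) (p : ℝ)
    {B W : Set ℝ} (s : Finset ι) (c : ι → Set ℝ)
    (hc : ∀ i ∈ s, Metric.ediam (c i) ≤ ENNReal.ofReal (ε * δ))
    (hB : ∀ y ∈ B, p + ε * y ∈ W ∧ ∃ i ∈ s, p + ε * y ∈ c i) :
    covN δ B ≤ #{i ∈ s | (c i ∩ W).Nonempty} := by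
  refine covN_le_card _ (fun i => (fun y => p + ε * y) ⁻¹' c i)
    (fun i hi => ediam_preimage_affine_le hε p (hc i (mem_filter.mp hi).1)) fun y hy => ?_
  obtain ⟨hW, i, hi, hyc⟩ := hB y hy
  exact ⟨i, mem_filter.mpr ⟨hi, _, hyc, hW⟩, hyc⟩

open Classical Finset in
theorem covN_mul_covN_le_three_mul {ε δ : ℝ} (hε : 0 < ε) (hδ : δ ≤ 1) {A B Z : Set ℝ}
    (hA : A.Finite) (hZ : Z.Finite) (hB : B ⊆ Ico 0 1) (hABZ : A + ε • B ⊆ Z) :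
    covN ε A * covN δ B ≤ 3 * covN (ε * δ) Z := by
  obtain ⟨P, hPA, hPinj, hAP⟩ := exists_injOn_floor_covN_le hε hA
  obtain ⟨c, hc, hZc⟩ := exists_cover_covN (ε * δ) hZ
  let Meets (p : ℝ) (i : Fin (covN (ε * δ) Z)) : Prop := (c i ∩ Set.Ico p (p + ε)).Nonempty
  have hcopy : ∀ p ∈ P, covN δ B ≤ #(univ.bipartiteAbove Meets p) := by
    refine fun p hp => covN_le_card_filter_inter_nonempty hε p _ c (fun i _ => hc i) fun y hy => ?_
    have hpy : p + ε * y ∈ Z := hABZ (Set.add_mem_add (hPA hp) (Set.smul_mem_smul_set hy))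
    refine ⟨⟨?_, ?_⟩, by simpa using hZc hpy⟩ <;> nlinarith [(hB hy).1, (hB hy).2]
  have hcε : ∀ i, Metric.ediam (c i) ≤ ENNReal.ofReal ε := fun i =>
    (hc i).trans (ENNReal.ofReal_le_ofReal (mul_le_of_le_one_right hε.le hδ))
  calc covN ε A * covN δ B ≤ #P * covN δ B := Nat.mul_le_mul_right _ hAP
    _ ≤ #(univ : Finset (Fin (covN (ε * δ) Z))) * 3 := card_mul_le_card_mul Meets hcopy
        fun i _ => card_filter_inter_Ico_nonempty_le_three hε hPinj (hcε i)
    _ = 3 * covN (ε * δ) Z := by simp [mul_comm]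

section IteratedFunctionSystem

variable {Λ : Type*} (f : Λ → ℝ → ℝ)

lemma iterPts_finite [Finite Λ] (n : ℕ) : (iterPts f n).Finite :=
  finite_range _

lemma iterPts_nonempty [Nonempty Λ] (n : ℕ) : (iterPts f n).Nonempty :=
  range_nonempty _

lemma iterPts_subset {X : Set ℝ} (hX : ∀ i, MapsTo (f i) X X) (h0X : (0 : ℝ) ∈ X) (n : ℕ) :
    iterPts f n ⊆ X := by
  induction n with
  | zero => rintro _ ⟨i, rfl⟩; exact h0X
  | succ n ih =>
    rintro _ ⟨i, rfl⟩
    exact hX (i 0) (ih ⟨_, rfl⟩)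

lemma apply_mem_iterPts_succ (i : Λ) {n : ℕ} {x : ℝ} (hx : x ∈ iterPts f n) :
    f i x ∈ iterPts f (n + 1) := by
  obtain ⟨j, rfl⟩ := hx
  exact ⟨Fin.cons i j, by simp [wordComp]⟩

lemma add_mul_mem_iterPts {r : ℝ} {a : Λ → ℝ} (hf : ∀ i x, f i x = r * x + a i) {m n : ℕ}
    {x y : ℝ} (hx : x ∈ iterPts f m) (hy : y ∈ iterPts f n) :
    x + r ^ m * y ∈ iterPts f (m + n) := by
  induction m generalizing x with
  | zero =>
    obtain ⟨i, rfl⟩ := hx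
    simpa [wordComp] using hy
  | succ m ih =>
    obtain ⟨i, rfl⟩ := hx
    have h := apply_mem_iterPts_succ f (i 0) (ih (x := wordComp f m (fun k => i k.succ) 0) ⟨_, rfl⟩)
    rw [Nat.succ_add]
    convert h using 1
    simp only [wordComp, hf]
    ring

lemma iterPts_add_smul_subset {r : ℝ} {a : Λ → ℝ} (hf : ∀ i x, f i x = r * x + a i) (m n : ℕ) :
    iterPts f m + r ^ m • iterPts f n ⊆ iterPts f (m + n) := by
  rintro _ ⟨x, hx, _, ⟨y, hy, rfl⟩, rfl⟩
  exact add_mul_mem_iterPts f hf hx hy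

end IteratedFunctionSystem

theorem selfSimilar_log_covering_superadditive_general {Λ : Type*} [Fintype Λ]
    (f : Λ → ℝ → ℝ) (r : ℝ) (a : Λ → ℝ)
    (hr0 : 0 < r) (hr1 : r < 1) (hf : ∀ i x, f i x = r * x + a i)
    (X : Set ℝ)
    (hXinv : X = ⋃ i : Λ, f i '' X)
    (h0X : (0 : ℝ) ∈ X) (hX01 : X ⊆ Set.Ico 0 1) :
    ∃ C : ℝ, ∀ m n : ℕ, 1 ≤ m → 1 ≤ n →
      Real.log (covN (r ^ (m + n)) (iterPts f (m + n))) ≥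
        Real.log (covN (r ^ m) (iterPts f m)) +
        Real.log (covN (r ^ n) (iterPts f n)) - C := by
  have hmaps (i : Λ) : MapsTo (f i) X X := fun x hx => by
    rw [hXinv]
    exact mem_iUnion_of_mem i (mem_image_of_mem _ hx)
  have : Nonempty Λ := by
    rw [hXinv, mem_iUnion] at h0X
    exact h0X.nonempty
  have hpos (ε : ℝ) (k : ℕ) : (0 : ℝ) < covN ε (iterPts f k) := by
    exact_mod_cast covN_pos ε (iterPts_finite f k) (iterPts_nonempty f k)
  refine ⟨Real.log 3, fun m n _ _ => ?_⟩
  have hprod := covN_mul_covN_le_three_mul (pow_pos hr0 m) (pow_le_one₀ (n := n) hr0.le hr1.le)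
    (iterPts_finite f m) (iterPts_finite f (m + n))
    ((iterPts_subset f hmaps h0X n).trans hX01) (iterPts_add_smul_subset f hf m n)
  rw [← pow_add] at hprod
  have hprodR : (covN (r ^ m) (iterPts f m) * covN (r ^ n) (iterPts f n) : ℝ) ≤
      3 * covN (r ^ (m + n)) (iterPts f (m + n)) := by
    exact_mod_cast hprod
  have hlog := Real.log_le_log (mul_pos (hpos _ m) (hpos _ n)) hprodR
  rw [Real.log_mul (hpos _ m).ne' (hpos _ n).ne', Real.log_mul (by norm_num) (hpos _ _).ne'] at hlog
  linarith

/-- For `s_n = log N_{rⁿ}(X_n)`, there is a constant `C` with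
`s_{m+n} ≥ s_m + s_n − C` for all `m, n ≥ 1`. -/
theorem selfSimilar_log_covering_superadditive {Λ : Type*} [Fintype Λ]
    (f : Λ → ℝ → ℝ) (r : ℝ) (a : Λ → ℝ) (hΛ : 2 ≤ Fintype.card Λ)
    (hr0 : 0 < r) (hr1 : r < 1) (hf : ∀ i x, f i x = r * x + a i)
    (X : Set ℝ) (hXne : X.Nonempty) (hXc : IsCompact X)
    (hXinv : X = ⋃ i : Λ, f i '' X)
    (h0X : (0 : ℝ) ∈ X) (hX01 : X ⊆ Set.Ico 0 1) :
    ∃ C : ℝ, ∀ m n : ℕ, 1 ≤ m → 1 ≤ n →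
      Real.log (covN (r ^ (m + n)) (iterPts f (m + n))) ≥
        Real.log (covN (r ^ m) (iterPts f m)) +
        Real.log (covN (r ^ n) (iterPts f n)) - C :=
  selfSimilar_log_covering_superadditive_general f r a hr0 hr1 hf X hXinv h0X hX01
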